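/- For every quiddity cycle c other than (0,0) and (1,1,1), the map δ is well defined at c (the rewriting process terminates with a result independent of the order of rule applications) and δ(c) belongs to 𝒜', i.e., δ(c) is a quiddity cycle of even length with exactly half of its entries equal to 1. -/

import Mathlib

/-- One generating move of the dihedral action on finite sequences:
cyclic rotation by one, or reversal. -/
def dihStep (c d : List ℕ) : Prop := d = c.rotate 1 ∨ d = c.reverse

/-- The equivalence relation on finite sequences generated by cyclic
rotations and reversal (the dihedral group action). -/
def DihEquiv : List ℕ → List ℕ → Prop := Relation.EqvGen dihStep

/-- The lists that are representatives of quiddity cycles: the smallest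
dihedrally closed collection containing `(0,0)` and closed under the rule
`(c₁,…,cₙ) ↦ (c₁+1, 1, c₂+1, c₃, …, cₙ)`. -/
inductive IsQuiddity : List ℕ → Prop
  | base : IsQuiddity [0, 0]
  | dih {c d : List ℕ} : IsQuiddity c → dihStep c d → IsQuiddity d
  | grow {a b : ℕ} {t : List ℕ} : IsQuiddity (a :: b :: t) →
      IsQuiddity ((a + 1) :: 1 :: (b + 1) :: t)

/-- The (class of the) cycle `c` contains the finite sequence `d`:
some representative of `c` has `d` as a block of consecutive entries. -/
def CycContains (c d : List ℕ) : Prop := ∃ c', DihEquiv c c' ∧ d <:+: c'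

/-- The setoid given by the dihedral group action on finite sequences. -/
def dihSetoid : Setoid (List ℕ) := Relation.EqvGen.setoid dihStep

/-- Classes of finite sequences modulo the dihedral action. -/
abbrev Cyc : Type := Quotient dihSetoid

/-- The class of a finite sequence modulo the dihedral action. -/
def cyc (c : List ℕ) : Cyc := Quotient.mk dihSetoid c

/-- The set `𝒜` of quiddity cycles, as classes. -/
def QuiddityCyc : Set Cyc := {x | ∃ c, IsQuiddity c ∧ x = cyc c}

/-- The set `𝒜'` of quiddity cycles of even length whose entries equal to `1`
make up exactly half of all entries. -/
def QuiddityCyc' : Set Cyc :=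
  {x | ∃ c, IsQuiddity c ∧ Even c.length ∧ c.count 1 = c.length / 2 ∧ x = cyc c}

/-- The map `ψ` on finite sequences: `(c₁,…,cₘ) ↦ (c₁+2, 1, c₂+2, 1, …, cₘ+2, 1)`. -/
def psiL (c : List ℕ) : List ℕ := (c.map fun a => [a + 2, 1]).flatten

/-- The map `ι`: prepend an entry `1`. -/
def iotaL (c : List ℕ) : List ℕ := 1 :: c

/-- One rewriting step of the map `ρ` on finite sequences:
(a) two adjacent entries `> 1` get a `1` inserted between them and are increased;
(b) a first entry `> 1` gets a `1` prepended and is increased;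
(c) a last entry `> 1` gets a `1` appended and is increased. -/
inductive rhoStep : List ℕ → List ℕ → Prop
  | mid (u v : List ℕ) (a b : ℕ) :
      rhoStep (u ++ (a + 2) :: (b + 2) :: v) (u ++ (a + 3) :: 1 :: (b + 3) :: v)
  | head (a : ℕ) (t : List ℕ) : rhoStep ((a + 2) :: t) (1 :: (a + 3) :: t)
  | last (u : List ℕ) (a : ℕ) : rhoStep (u ++ [a + 2]) (u ++ [a + 3, 1])

/-- `ρ c = d`: iterated application of the rewriting rules starting from `c`
terminates in `d`, to which no rule applies anymore. -/
def RhoEval (c d : List ℕ) : Prop :=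
  Relation.ReflTransGen rhoStep c d ∧ ∀ e, ¬ rhoStep d e

/-- One rewriting step of the map `δ` on classes: two cyclically adjacent
entries `> 1` get a `1` inserted between them and are increased. -/
def deltaStep (x y : Cyc) : Prop :=
  ∃ a b t, x = cyc ((a + 2) :: (b + 2) :: t) ∧ y = cyc ((a + 3) :: 1 :: (b + 3) :: t)

/-- `δ x = y`: iterated application of the rewriting rule starting from `x`
terminates in `y`, to which the rule does not apply anymore. -/
def DeltaEval (x y : Cyc) : Prop :=
  Relation.ReflTransGen deltaStep x y ∧ ∀ z, ¬ deltaStep y z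

/-!
Resolving all redexes of a cycle at once gives a cycle `ν(c)`: every entry `> 1` is increased by
the number of its neighbours `> 1`, and a `1` is inserted between any two adjacent entries `> 1`.
A δ-step does not change `ν` and lengthens the cycle by one, while `ν(c)` is at least as long as
`c`; so rewriting terminates, and a cycle without redexes is its own `ν`. Hence every maximal
rewriting sequence from `c` ends in `ν(c)`, that is, `δ(c) = ν(c)`.

A δ-step is an instance of the rule generating `𝒜`, so `δ(c)` is a quiddity cycle. Apart from
`(0,0)` and `(1,1,1)`, quiddity cycles have positive entries and no two adjacent `1`s, while `δ(c)`
has no two adjacent entries `> 1`: around `δ(c)`, `1`s and entries `> 1` alternate.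
-/

namespace Relation

variable {α : Type*}

/-- `N x` is the end of every maximal `r`-rewriting sequence from a point `x` satisfying `P`. -/
structure IsNormalizer (r : α → α → Prop) (P : α → Prop) (N : α → α) (μ : α → ℕ) : Prop where
  pred_of_rel : ∀ {x y}, r x y → P x → P y
  eq_of_rel : ∀ {x y}, r x y → N x = N y
  measure_lt : ∀ {x y}, r x y → μ x < μ y
  measure_le : ∀ x, μ x ≤ μ (N x)
  eq_self_of_terminal : ∀ {x}, P x → (∀ y, ¬ r x y) → N x = x

namespace IsNormalizer

variable {r : α → α → Prop} {P : α → Prop} {N : α → α} {μ : α → ℕ} {x y : α}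

theorem pred_of_reflTransGen (h : IsNormalizer r P N μ) (hxy : ReflTransGen r x y) (hx : P x) :
    P y := by
  induction hxy with
  | refl => exact hx
  | tail _ hyz ih => exact h.pred_of_rel hyz ih

theorem eq_of_reflTransGen (h : IsNormalizer r P N μ) (hxy : ReflTransGen r x y) : N x = N y := by
  induction hxy with
  | refl => rfl
  | tail _ hyz ih => exact ih.trans (h.eq_of_rel hyz)

theorem exists_terminal (h : IsNormalizer r P N μ) (x : α) :
    ∃ y, ReflTransGen r x y ∧ ∀ z, ¬ r y z := by
  -- each step brings `μ` closer to the invariant bound `μ (N x)`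
  induction hn : μ (N x) - μ x using Nat.strong_induction_on generalizing x with
  | _ n ih =>
    by_cases hx : ∃ y, r x y
    · obtain ⟨y, hxy⟩ := hx
      have hlt := h.measure_lt hxy
      have hle := h.measure_le y
      obtain ⟨z, hyz, hz⟩ := ih _ (by rw [← h.eq_of_rel hxy] at hle ⊢; omega) y rfl
      exact ⟨z, .head hxy hyz, hz⟩
    · exact ⟨x, .refl, not_exists.mp hx⟩

theorem eq_of_terminal (h : IsNormalizer r P N μ) (hx : P x) (hxy : ReflTransGen r x y)
    (hy : ∀ z, ¬ r y z) : y = N x :=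
  (h.eq_self_of_terminal (h.pred_of_reflTransGen hxy hx) hy).symm.trans
    (h.eq_of_reflTransGen hxy).symm

theorem reflTransGen (h : IsNormalizer r P N μ) (hx : P x) (hxy : ReflTransGen r x y) :
    ReflTransGen r y (N x) := by
  obtain ⟨z, hyz, hz⟩ := h.exists_terminal y
  rwa [← h.eq_of_terminal hx (hxy.trans hyz) hz]

theorem terminal (h : IsNormalizer r P N μ) (hx : P x) : ∀ z, ¬ r (N x) z := by
  obtain ⟨y, hxy, hy⟩ := h.exists_terminal x
  rwa [← h.eq_of_terminal hx hxy hy]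

end IsNormalizer

end Relation

namespace List

variable {α : Type*} {R : α → α → Prop}

def CyclicChain (R : α → α → Prop) (l : List α) : Prop :=
  ∀ i (h : i < l.length), R l[i] (l[(i + 1) % l.length]'(Nat.mod_lt _ (Nat.zero_lt_of_lt h)))

theorem cyclicChain_iff {l : List α} :
    CyclicChain R l ↔ IsChain R l ∧ ∀ x ∈ l.getLast?, ∀ y ∈ l.head?, R x y := by
  rcases eq_or_ne l [] with rfl | hne
  · simp [CyclicChain]
  have hpos : 0 < l.length := length_pos_iff.mpr hne
  have hwrap : (l.length - 1 + 1) % l.length = 0 := by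
    rw [Nat.sub_add_cancel hpos, Nat.mod_self]
  rw [getLast?_eq_getElem?, head?_eq_getElem?, getElem?_eq_getElem (by omega),
    getElem?_eq_getElem hpos]
  simp only [Option.mem_def, Option.some.injEq, forall_eq']
  constructor
  · intro h
    refine ⟨isChain_iff_getElem.mpr fun i hi => ?_, ?_⟩
    · simpa [Nat.mod_eq_of_lt hi] using h i (by omega)
    · simpa [hwrap] using h (l.length - 1) (by omega)
  · rintro ⟨hc, hw⟩ i hi
    rcases lt_or_ge (i + 1) l.length with hlt | hge
    · simpa [Nat.mod_eq_of_lt hlt] using isChain_iff_getElem.mp hc i hlt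
    · obtain rfl : i = l.length - 1 := by omega
      simpa [hwrap] using hw

theorem CyclicChain.rotate_one {l : List α} (h : CyclicChain R l) : CyclicChain R (l.rotate 1) := by
  intro i hi
  rw [length_rotate] at hi
  simpa only [getElem_rotate, length_rotate] using h ((i + 1) % l.length) (Nat.mod_lt _ (by omega))

theorem CyclicChain.reverse (hR : ∀ a b, R a b → R b a) {l : List α} (h : CyclicChain R l) :
    CyclicChain R l.reverse := by
  obtain ⟨hc, hw⟩ := cyclicChain_iff.mp h
  refine cyclicChain_iff.mpr ⟨isChain_reverse.mpr (hc.imp fun a b => hR a b), ?_⟩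
  rw [getLast?_reverse, head?_reverse]
  exact fun x hx y hy => hR _ _ (hw y hy x hx)

end List

theorem dihEquiv_rotate (c : List ℕ) (k : ℕ) : DihEquiv c (c.rotate k) := by
  induction k with
  | zero => rw [List.rotate_zero]; exact .refl c
  | succ k ih => exact ih.trans _ _ _ (.rel _ _ (.inl (c.rotate_rotate k 1).symm))

theorem dihEquiv_reverse (c : List ℕ) : DihEquiv c c.reverse :=
  .rel _ _ (.inr rfl)

theorem DihEquiv.length_eq {c d : List ℕ} (h : DihEquiv c d) : c.length = d.length := by
  induction h with
  | rel x y hxy => rcases hxy with rfl | rfl <;> simp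
  | refl => rfl
  | symm _ _ _ ih => exact ih.symm
  | trans _ _ _ _ _ ih₁ ih₂ => exact ih₁.trans ih₂

theorem DihEquiv.of_isRotated {c d : List ℕ} (h : c ~r d) : DihEquiv c d := by
  obtain ⟨k, rfl⟩ := h
  exact dihEquiv_rotate c k

namespace Saturation

open List

def bump (a b : ℕ) : ℕ := if 2 ≤ a ∧ 2 ≤ b then 1 else 0

def gap (a b : ℕ) : List ℕ := if 2 ≤ a ∧ 2 ≤ b then [1] else []

/-- The image of an entry `v` with neighbours `p` and `q`, followed by the `1` inserted between
`v` and `q`. -/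
def block (p v q : ℕ) : List ℕ := (v + bump p v + bump v q) :: gap v q

/-- Saturation of a segment `l` of a cycle whose outer neighbours are `p` and `q`. -/
def saturateAux : ℕ → List ℕ → ℕ → List ℕ
  | _, [], _ => []
  | p, v :: t, q => block p v (t.headD q) ++ saturateAux v t q

/-- All redexes of the cycle `c` resolved at once; this is `δ(c)`. -/
def saturate : List ℕ → List ℕ
  | [] => []
  | v :: t => saturateAux (t.getLastD v) (v :: t) v

theorem bump_comm (a b : ℕ) : bump a b = bump b a := by
  simp [bump, and_comm]

theorem gap_comm (a b : ℕ) : gap a b = gap b a := by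
  simp [gap, and_comm]

theorem reverse_gap (a b : ℕ) : (gap a b).reverse = gap a b := by
  unfold gap; split <;> rfl

theorem bump_congr {a a' b b' : ℕ} (ha : 2 ≤ a ↔ 2 ≤ a') (hb : 2 ≤ b ↔ 2 ≤ b') :
    bump a b = bump a' b' := by
  unfold bump; rw [if_congr (and_congr ha hb) rfl rfl]

theorem gap_congr {a a' b b' : ℕ} (ha : 2 ≤ a ↔ 2 ≤ a') (hb : 2 ≤ b ↔ 2 ≤ b') :
    gap a b = gap a' b' := by
  unfold gap; rw [if_congr (and_congr ha hb) rfl rfl]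

theorem two_le_head_block_iff (p v q : ℕ) : 2 ≤ v + bump p v + bump v q ↔ 2 ≤ v := by
  unfold bump; split_ifs <;> omega

theorem length_le_length_saturateAux (p q : ℕ) (l : List ℕ) :
    l.length ≤ (saturateAux p l q).length := by
  induction l generalizing p with
  | nil => simp [saturateAux]
  | cons v t ih =>
    have := ih v
    simp only [saturateAux, block, length_append, length_cons]
    omega

theorem length_le_length_saturate (c : List ℕ) : c.length ≤ (saturate c).length := by
  cases c with
  | nil => rfl
  | cons v t => exact length_le_length_saturateAux _ _ _

theorem saturateAux_congr (l : List ℕ) {p p' q q' : ℕ} (hp : 2 ≤ p ↔ 2 ≤ p')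
    (hq : 2 ≤ q ↔ 2 ≤ q') : saturateAux p l q = saturateAux p' l q' := by
  induction l generalizing p p' with
  | nil => rfl
  | cons v t ih =>
    cases t with
    | nil =>
      simp only [saturateAux, headD_nil, block]
      rw [bump_congr hp Iff.rfl, bump_congr Iff.rfl hq, gap_congr Iff.rfl hq]
    | cons u t' =>
      simp only [saturateAux, headD_cons, block] at ih ⊢
      rw [bump_congr hp Iff.rfl, ih Iff.rfl]

theorem saturateAux_concat (l : List ℕ) (p v q : ℕ) (h : l ≠ []) :
    saturateAux p (l ++ [v]) q = saturateAux p l v ++ block (l.getLastD 0) v q := by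
  induction l generalizing p with
  | nil => exact absurd rfl h
  | cons a l ih =>
    cases l with
    | nil => simp [saturateAux]
    | cons b l =>
      rw [cons_append, saturateAux, ih a (cons_ne_nil b l)]
      simp [saturateAux, append_assoc]

theorem gap_append_block (u v q : ℕ) :
    gap u v ++ block u v q = (block q v u).reverse ++ gap v q := by
  have hval : v + bump u v + bump v q = v + bump q v + bump v u := by
    rw [bump_comm q v, bump_comm v u]; omega
  simp only [block, reverse_cons, reverse_gap, hval, gap_comm u v, append_assoc,
    cons_append, nil_append]

/-- Reversal moves each inserted `1` from behind its entry to the front, hence the outer `gap`s. -/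
theorem gap_append_saturateAux_reverse (l : List ℕ) (p q : ℕ) :
    gap (l.getLastD 0) p ++ saturateAux p l.reverse q =
      (saturateAux q l p).reverse ++ gap (l.headD 0) q := by
  induction l generalizing p q with
  | nil => rfl
  | cons v t ih =>
    cases t with
    | nil =>
      simpa [saturateAux, gap_comm v p] using gap_append_block p v q
    | cons u t =>
      specialize ih p v
      have hlast : (u :: t).reverse.getLastD 0 = u := by simp
      conv_rhs => rw [saturateAux, headD_cons, reverse_append]
      rw [reverse_cons, saturateAux_concat _ _ _ _ (by simp), ← append_assoc]
      simp only [getLastD_cons, headD_cons] at ih ⊢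
      rw [ih, append_assoc, hlast, gap_append_block]
      simp

theorem saturate_eq (c : List ℕ) :
    saturate c = saturateAux (c.getLastD 0) c (c.headD 0) := by
  cases c with
  | nil => rfl
  | cons v t => rw [saturate, getLastD_cons, headD_cons]

theorem saturate_isRotated_rotate_one (c : List ℕ) : saturate c ~r saturate (c.rotate 1) := by
  match c with
  | [] => exact .refl _
  | [v] => exact ⟨0, by simp⟩
  | v :: u :: t =>
    refine ⟨(block ((u :: t).getLastD 0) v u).length, Eq.symm ?_⟩
    conv_rhs => rw [saturate, saturateAux, headD_cons]
    rw [rotate_cons_succ, rotate_zero, cons_append, saturate,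
      getLastD_concat, ← cons_append, saturateAux_concat _ _ _ _ (cons_ne_nil u t)]
    simp only [getLastD_cons]
    rw [rotate_append_length_eq]

theorem reverse_saturate_isRotated (c : List ℕ) : (saturate c).reverse ~r saturate c.reverse := by
  have key := gap_append_saturateAux_reverse c (c.headD 0) (c.getLastD 0)
  rw [gap_comm, ← saturate_eq c] at key
  have hrev : saturate c.reverse = saturateAux (c.headD 0) c.reverse (c.getLastD 0) := by
    rw [saturate_eq]
    simp only [getLastD_eq_getLast?, headD_eq_head?_getD, getLast?_reverse, head?_reverse]
  rw [← hrev] at key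
  unfold gap at key
  split_ifs at key
  · -- the `1` inserted between the last and the first entry moves from the end to the front
    rcases hY : (saturate c).reverse with _ | ⟨y, Y⟩
    · rw [hY, nil_append, singleton_append, cons.injEq] at key
      rw [key.2]
    · rw [hY, singleton_append, cons_append, cons.injEq] at key
      obtain ⟨rfl, hX⟩ := key
      exact ⟨1, by simp [hX]⟩
  · rw [nil_append, append_nil] at key
    rw [key]

theorem saturate_dihEquiv {c d : List ℕ} (h : DihEquiv c d) :
    DihEquiv (saturate c) (saturate d) := by
  induction h with
  | rel x y hxy =>
    rcases hxy with rfl | rfl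
    · exact DihEquiv.of_isRotated (saturate_isRotated_rotate_one x)
    · exact (dihEquiv_reverse _).trans _ _ _ (DihEquiv.of_isRotated (reverse_saturate_isRotated x))
  | refl => exact .refl _
  | symm _ _ _ ih => exact ih.symm
  | trans _ _ _ _ _ ih₁ ih₂ => exact ih₁.trans _ _ _ ih₂

/-- The step does in advance what saturation does to the redex `(a + 2, b + 2)`, and does not
change which entries are `> 1`. -/
theorem saturate_grow (a b : ℕ) (t : List ℕ) :
    saturate ((a + 2) :: (b + 2) :: t) = saturate ((a + 3) :: 1 :: (b + 3) :: t) := by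
  have hlast : 2 ≤ t.getLastD (b + 3) ↔ 2 ≤ t.getLastD (b + 2) := by
    cases t <;> simp only [getLastD_nil, getLastD_cons]; omega
  have hnext : 2 ≤ t.headD (a + 3) ↔ 2 ≤ t.headD (a + 2) := by
    cases t <;> simp only [headD_nil, headD_cons]; omega
  have htail : saturateAux (b + 3) t (a + 3) = saturateAux (b + 2) t (a + 2) :=
    saturateAux_congr t (by omega) (by omega)
  simp only [saturate, saturateAux, block, getLastD_cons, headD_cons, htail,
    bump_congr hlast (by omega : 2 ≤ a + 3 ↔ 2 ≤ a + 2),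
    bump_congr (by omega : 2 ≤ b + 3 ↔ 2 ≤ b + 2) hnext,
    gap_congr (by omega : 2 ≤ b + 3 ↔ 2 ≤ b + 2) hnext]
  simp [bump, gap]
  omega

theorem saturateAux_eq_self (l : List ℕ) (p q : ℕ)
    (h : (p :: (l ++ [q])).IsChain fun a b => ¬(2 ≤ a ∧ 2 ≤ b)) : saturateAux p l q = l := by
  induction l generalizing p with
  | nil => rfl
  | cons v t ih =>
    rw [cons_append, isChain_cons_cons] at h
    have hvt : ¬(2 ≤ v ∧ 2 ≤ t.headD q) := by
      cases t with
      | nil => simpa using h.2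
      | cons u t => exact (isChain_cons_cons.mp h.2).1
    simp only [saturateAux, ih v h.2, block, bump, gap, if_neg h.1, if_neg hvt]
    rfl

theorem isChain_saturateAux_append (l : List ℕ) (p q w : ℕ) (hw : 2 ≤ w → 2 ≤ q) :
    (saturateAux p l q ++ [w]).IsChain fun a b => ¬(2 ≤ a ∧ 2 ≤ b) := by
  induction l generalizing p with
  | nil => exact isChain_singleton w
  | cons v t ih =>
    rw [saturateAux, block, cons_append, cons_append, append_assoc]
    by_cases hvt : 2 ≤ v ∧ 2 ≤ t.headD q
    · rw [gap, if_pos hvt, singleton_append]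
      refine isChain_cons_cons.mpr ⟨by omega, isChain_cons.mpr ⟨?_, ih v⟩⟩
      intro y _ hy
      omega
    · rw [gap, if_neg hvt, nil_append]
      refine isChain_cons.mpr ⟨?_, ih v⟩
      intro y hy hvy
      rw [two_le_head_block_iff] at hvy
      cases t with
      | nil =>
        simp only [saturateAux, nil_append, head?_cons, Option.mem_def,
          Option.some.injEq] at hy
        exact hvt ⟨hvy.1, hw (hy ▸ hvy.2)⟩
      | cons u t =>
        simp only [saturateAux, block, cons_append, head?_cons, Option.mem_def,
          Option.some.injEq] at hy
        subst hy
        exact hvt ⟨hvy.1, (two_le_head_block_iff _ _ _).mp hvy.2⟩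

theorem saturate_eq_self {c : List ℕ} (h : c.CyclicChain fun a b => ¬(2 ≤ a ∧ 2 ≤ b)) :
    saturate c = c := by
  cases c with
  | nil => rfl
  | cons v t =>
    obtain ⟨hc, hw⟩ := cyclicChain_iff.mp h
    simp only [getLast?_cons, head?_cons, Option.mem_def, Option.some.injEq, forall_eq'] at hw
    apply saturateAux_eq_self
    rw [cons_append, isChain_cons_cons, ← cons_append, isChain_append]
    exact ⟨by simpa using hw, hc, isChain_singleton v, by simpa [getLast?_cons] using hw⟩

theorem cyclicChain_saturate (c : List ℕ) :
    (saturate c).CyclicChain fun a b => ¬(2 ≤ a ∧ 2 ≤ b) := by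
  cases c with
  | nil => simp [saturate, CyclicChain]
  | cons v t =>
    set w := v + bump (t.getLastD v) v + bump v (t.headD v)
    have hhead : (saturate (v :: t)).head? = some w := rfl
    have hchain := isChain_saturateAux_append (v :: t) (t.getLastD v) v w
      (two_le_head_block_iff _ _ _).mp
    rw [← saturate, isChain_append] at hchain
    refine cyclicChain_iff.mpr ⟨hchain.1, fun x hx y hy => ?_⟩
    rw [hhead, Option.mem_some_iff] at hy
    exact hchain.2.2 x hx y (by simp [hy])

end Saturation

namespace IsQuiddity

variable {c d : List ℕ}

theorem rotate (h : IsQuiddity c) (k : ℕ) : IsQuiddity (c.rotate k) := by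
  induction k with
  | zero => rwa [List.rotate_zero]
  | succ k ih => exact ih.dih (.inl (c.rotate_rotate k 1).symm)

theorem iff_of_dihEquiv (hcd : DihEquiv c d) : IsQuiddity c ↔ IsQuiddity d := by
  induction hcd with
  | rel x y hxy =>
    refine ⟨fun h => h.dih hxy, fun h => ?_⟩
    rcases hxy with rfl | rfl
    · rcases eq_or_ne x [] with rfl | hne
      · exact h
      · have hlen : 1 + (x.length - 1) = x.length := by
          have := List.length_pos_iff.mpr hne; omega
        simpa [List.rotate_rotate, hlen] using h.rotate (x.length - 1)
    · simpa using h.dih (.inr rfl)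
  | refl => rfl
  | symm _ _ _ ih => exact ih.symm
  | trans _ _ _ _ _ ih₁ ih₂ => exact ih₁.trans ih₂

theorem trichotomy (h : IsQuiddity c) :
    c = [0, 0] ∨ c = [1, 1, 1] ∨
      4 ≤ c.length ∧ (∀ x ∈ c, 1 ≤ x) ∧ c.CyclicChain fun a b => ¬(a = 1 ∧ b = 1) := by
  induction h with
  | base => exact .inl rfl
  | dih _ hstep ih =>
    rcases ih with rfl | rfl | ⟨hlen, hpos, hchain⟩
    · rcases hstep with rfl | rfl <;> exact .inl rfl
    · rcases hstep with rfl | rfl <;> exact .inr (.inl rfl)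
    · refine .inr (.inr ?_)
      rcases hstep with rfl | rfl
      · exact ⟨by simpa, fun x hx => hpos x (List.mem_rotate.mp hx), hchain.rotate_one⟩
      · exact ⟨by simpa, fun x hx => hpos x (List.mem_reverse.mp hx),
          hchain.reverse fun a b h ⟨hb, ha⟩ => h ⟨ha, hb⟩⟩
  | @grow a b t _ ih =>
    rcases ih with h | ih
    · obtain ⟨rfl, rfl, rfl⟩ : a = 0 ∧ b = 0 ∧ t = [] := by simpa using h
      exact .inr (.inl rfl)
    obtain ⟨hlen, hpos, ht⟩ : 3 ≤ (a :: b :: t).length ∧ (∀ x ∈ a :: b :: t, 1 ≤ x) ∧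
        t.IsChain fun a b => ¬(a = 1 ∧ b = 1) := by
      rcases ih with h | ⟨hlen, hpos, hchain⟩
      · obtain ⟨rfl, rfl, rfl⟩ : a = 1 ∧ b = 1 ∧ t = [1] := by simpa using h
        exact ⟨le_rfl, by simp, List.isChain_singleton 1⟩
      · exact ⟨by omega, hpos, (List.cyclicChain_iff.mp hchain).1.tail.tail⟩
    have ha := hpos a (by simp)
    have hb := hpos b (by simp)
    refine .inr (.inr ⟨by simp only [List.length_cons] at hlen ⊢; omega, ?_, List.cyclicChain_iff.mpr ⟨?_, ?_⟩⟩)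
    · simp only [List.mem_cons] at hpos ⊢
      rintro x (rfl | rfl | rfl | hx) <;> first | omega | exact hpos x (.inr (.inr hx))
    · refine List.isChain_cons_cons.mpr ⟨by omega, List.isChain_cons_cons.mpr ⟨by omega,
        List.isChain_cons.mpr ⟨fun _ _ => by omega, ht⟩⟩⟩
    · simp only [List.head?_cons, Option.mem_some_iff]
      rintro x - y rfl
      omega

theorem two_le_length (h : IsQuiddity c) : 2 ≤ c.length := by
  rcases h.trichotomy with rfl | rfl | ⟨h, -⟩
  · rfl
  · simp
  · omega

theorem four_le_length (hc : IsQuiddity c) (h0 : ¬ DihEquiv c [0, 0])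
    (h1 : ¬ DihEquiv c [1, 1, 1]) : 4 ≤ c.length := by
  rcases hc.trichotomy with rfl | rfl | ⟨h, -⟩
  · exact absurd (.refl _) h0
  · exact absurd (.refl _) h1
  · exact h

end IsQuiddity

theorem two_mul_count_one_eq_length {l : List ℕ} (hpos : ∀ x ∈ l, 1 ≤ x)
    (h11 : l.CyclicChain fun a b => ¬(a = 1 ∧ b = 1))
    (h22 : l.CyclicChain fun a b => ¬(2 ≤ a ∧ 2 ≤ b)) : 2 * l.count 1 = l.length := by
  set B := l.map (· == 1)
  -- an entry is `1` exactly when its cyclic successor is not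
  have hB : B.rotate 1 = B.map not := by
    refine List.ext_getElem (by simp [B]) fun i h₁ h₂ => ?_
    simp only [B, List.length_map, List.length_rotate] at h₁ h₂
    have hnext : (i + 1) % l.length < l.length := Nat.mod_lt _ (by omega)
    have h11i := h11 i h₂
    have h22i := h22 i h₂
    have hposi := hpos _ (List.getElem_mem h₂)
    have hposnext := hpos _ (List.getElem_mem hnext)
    simp only [B, List.getElem_map, List.getElem_rotate, List.length_map]
    rw [Bool.eq_iff_iff]
    simp only [beq_iff_eq, Bool.not_eq_true', beq_eq_false_iff_ne]
    omega
  have hcount : B.count true = B.count false := by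
    rw [← (List.rotate_perm B 1).count_eq, hB]
    exact List.count_map_of_injective B not Bool.not_injective false
  have htotal := List.count_true_add_count_false B
  have hlen : B.length = l.length := List.length_map _
  have h1 : l.count 1 = B.count true := by
    simp [B, List.count, List.countP_map, Function.comp_def]
  omega

namespace Cyc

def length : Cyc → ℕ := Quotient.lift List.length fun _ _ => DihEquiv.length_eq

def saturate : Cyc → Cyc := Quotient.map Saturation.saturate fun _ _ => Saturation.saturate_dihEquiv

end Cyc

theorem exists_deltaStep_of_not_cyclicChain {e : List ℕ} (hlen : 2 ≤ e.length)
    (h : ¬ e.CyclicChain fun a b => ¬(2 ≤ a ∧ 2 ≤ b)) : ∃ y, deltaStep (cyc e) y := by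
  simp only [List.CyclicChain, not_forall, not_not] at h
  obtain ⟨i, hi, hx, hy⟩ := h
  have hlen' : 2 ≤ (e.rotate i).length := by simpa
  rcases hr : e.rotate i with _ | ⟨x, _ | ⟨y, t⟩⟩
  · simp [hr] at hlen'
  · simp [hr] at hlen'
  have hx' : x = e[i] := by
    simpa [hr, Nat.mod_eq_of_lt hi] using List.getElem_rotate e i 0 (by omega)
  have hy' : y = e[(i + 1) % e.length]'(Nat.mod_lt _ (by omega)) := by
    simpa [hr, Nat.add_comm 1 i] using List.getElem_rotate e i 1 (by omega)
  obtain ⟨a, rfl⟩ := Nat.exists_eq_add_of_le' (hx' ▸ hx)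
  obtain ⟨b, rfl⟩ := Nat.exists_eq_add_of_le' (hy' ▸ hy)
  exact ⟨_, a, b, t, hr ▸ Quotient.sound (dihEquiv_rotate e i), rfl⟩

theorem isQuiddity_of_cyc_mem {c : List ℕ} (h : cyc c ∈ QuiddityCyc) : IsQuiddity c := by
  obtain ⟨d, hd, hdc⟩ := h
  exact (IsQuiddity.iff_of_dihEquiv (Quotient.exact hdc)).mpr hd

theorem deltaStep_mem_quiddityCyc {x y : Cyc} (hxy : deltaStep x y) (hx : x ∈ QuiddityCyc) :
    y ∈ QuiddityCyc := by
  obtain ⟨a, b, t, rfl, rfl⟩ := hxy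
  exact ⟨_, (isQuiddity_of_cyc_mem hx).grow, rfl⟩

theorem isNormalizer_deltaStep :
    Relation.IsNormalizer deltaStep (· ∈ QuiddityCyc) Cyc.saturate Cyc.length where
  pred_of_rel := deltaStep_mem_quiddityCyc
  eq_of_rel := by
    rintro _ _ ⟨a, b, t, rfl, rfl⟩
    exact congrArg cyc (Saturation.saturate_grow a b t)
  measure_lt := by
    rintro _ _ ⟨a, b, t, rfl, rfl⟩
    exact Nat.lt_succ_self _
  measure_le := Quotient.ind Saturation.length_le_length_saturate
  eq_self_of_terminal := by
    rintro ⟨e⟩ hx hterm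
    have hq := isQuiddity_of_cyc_mem hx
    have hchain : e.CyclicChain fun a b => ¬(2 ≤ a ∧ 2 ≤ b) := by
      by_contra h
      obtain ⟨y, hy⟩ := exists_deltaStep_of_not_cyclicChain hq.two_le_length h
      exact hterm y hy
    exact congrArg cyc (Saturation.saturate_eq_self hchain)

theorem cyc_mem_quiddityCyc' {c : List ℕ} (hc : IsQuiddity c) (hlen : 4 ≤ c.length)
    (h22 : c.CyclicChain fun a b => ¬(2 ≤ a ∧ 2 ≤ b)) : cyc c ∈ QuiddityCyc' := by
  obtain ⟨hpos, h11⟩ : (∀ x ∈ c, 1 ≤ x) ∧ c.CyclicChain fun a b => ¬(a = 1 ∧ b = 1) := by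
    rcases hc.trichotomy with rfl | rfl | ⟨-, h⟩
    · simp at hlen
    · simp at hlen
    · exact h
  have hcount := two_mul_count_one_eq_length hpos h11 h22
  exact ⟨c, hc, ⟨c.count 1, by omega⟩, by omega, rfl⟩

/-- For every quiddity cycle `c` other than `(0,0)` and `(1,1,1)`, the rewriting
process defining `δ` terminates at `c` with a result independent of the order of
rule applications, and the result `δ(c)` lies in `𝒜'`. -/
theorem delta_well_defined (c : List ℕ) (hc : IsQuiddity c)
    (h0 : ¬ DihEquiv c [0, 0]) (h1 : ¬ DihEquiv c [1, 1, 1]) :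
    ∃ x : Cyc, DeltaEval (cyc c) x ∧
      (∀ y : Cyc, Relation.ReflTransGen deltaStep (cyc c) y →
        Relation.ReflTransGen deltaStep y x) ∧
      (∀ y : Cyc, DeltaEval (cyc c) y → y = x) ∧
      x ∈ QuiddityCyc' := by
  have hN := isNormalizer_deltaStep
  have hcq : cyc c ∈ QuiddityCyc := ⟨c, hc, rfl⟩
  have hreach := hN.reflTransGen hcq .refl
  refine ⟨(cyc c).saturate, ⟨hreach, hN.terminal hcq⟩, fun y hy => hN.reflTransGen hcq hy,
    fun y hy => hN.eq_of_terminal hcq hy.1 hy.2, ?_⟩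
  exact cyc_mem_quiddityCyc' (isQuiddity_of_cyc_mem (hN.pred_of_reflTransGen hreach hcq))
    ((hc.four_le_length h0 h1).trans (Saturation.length_le_length_saturate c))
    (Saturation.cyclicChain_saturate c)
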